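/- arXiv:2604.11049 — 2 statements merged into one kernel-verified Lean document; each statement's English description precedes it below -/
import Mathlib

section
/- Let (S, ≥) be a finite partially ordered set, and let ι₁, ι₂ : S → S be two involutions (ι₁ ∘ ι₁ = id and ι₂ ∘ ι₂ = id) such that ι₁(s) ≥ ι₂(s) for every s ∈ S. Then ι₁ = ι₂. -/
/-!
The composite `ι₂ ∘ ι₁` is a permutation of `S` that moves every element downwards, since
`ι₂ (ι₁ s) ≤ ι₁ (ι₁ s) = s`. On a finite set every point is periodic under a permutation, and a
downward-moving map can only return to its starting point if it never moved; so `ι₂ ∘ ι₁ = id`.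
-/

theorem Function.Injective.eq_id_of_le_id {α : Type*} [Finite α] [PartialOrder α] {f : α → α}
    (hf : Function.Injective f) (hle : f ≤ id) : f = id := by
  funext x
  obtain ⟨n, hn, hperiodic⟩ := Function.mem_periodicPts.mp (hf.mem_periodicPts x)
  have hx_le : x ≤ f x :=
    calc x = f^[n] x := hperiodic.symm
      _ ≤ f^[1] x := Function.antitone_iterate_of_le_id hle hn x
  exact le_antisymm (hle x) hx_le

/-- Lemma on involutions on finite posets: if two involutions `ι₁, ι₂` on a finite
partially ordered set satisfy `ι₁ s ≥ ι₂ s` for all `s`, then they are equal. -/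
theorem stmt0 {S : Type*} [Fintype S] [PartialOrder S]
    (ι₁ ι₂ : S → S)
    (h1 : ∀ s, ι₁ (ι₁ s) = s) (h2 : ∀ s, ι₂ (ι₂ s) = s)
    (h : ∀ s, ι₁ s ≥ ι₂ s) : ι₁ = ι₂ := by
  have hcomp_le : ι₂ ∘ ι₁ ≤ id := fun s => by
    simpa only [Function.comp_apply, id, h1 s] using h (ι₁ s)
  have hcomp_inj : Function.Injective (ι₂ ∘ ι₁) :=
    (Function.Involutive.injective h2).comp (Function.Involutive.injective h1)
  have hcomp_id := hcomp_inj.eq_id_of_le_id hcomp_le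
  funext s
  calc ι₁ s = ι₂ (ι₂ (ι₁ s)) := (h2 _).symm
    _ = ι₂ s := congrArg ι₂ (congrFun hcomp_id s)
end

section
/- Let (S, ≥) be a finite partially ordered set and ι₁, ι₂ : S → S two involutions with ι₁(s) ≥ ι₂(s) for all s. If s is a minimal element of the set S' = {s ∈ S | ι₁(s) ≠ ι₂(s)} (assumed nonempty), then ι₂(ι₁(s)) ∉ S', i.e. ι₁(ι₂(ι₁(s))) = ι₂(ι₂(ι₁(s))). -/
theorem stmt1_general {S : Type*} [PartialOrder S]
    (ι₁ ι₂ : S → S)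
    (h1 : ∀ s, ι₁ (ι₁ s) = s) (h2 : ∀ s, ι₂ (ι₂ s) = s)
    (h : ∀ s, ι₁ s ≥ ι₂ s)
    (s : S) (hs : ι₁ s ≠ ι₂ s)
    (hmin : ∀ t, ι₁ t ≠ ι₂ t → t ≤ s → t = s) :
    ι₁ (ι₂ (ι₁ s)) = ι₂ (ι₂ (ι₁ s)) := by
  by_contra hne
  have hle : ι₂ (ι₁ s) ≤ s := (h (ι₁ s)).trans_eq (h1 s)
  have hfix : ι₂ (ι₁ s) = s := hmin _ hne hle
  exact hs <| calc
    ι₁ s = ι₂ (ι₂ (ι₁ s)) := (h2 _).symm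
    _ = ι₂ s := congrArg ι₂ hfix

/-- If `s` is a minimal element of the set where two involutions `ι₁ ≥ ι₂` disagree,
then `ι₂ (ι₁ s)` is not in that set. -/
theorem stmt1 {S : Type*} [Fintype S] [PartialOrder S]
    (ι₁ ι₂ : S → S)
    (h1 : ∀ s, ι₁ (ι₁ s) = s) (h2 : ∀ s, ι₂ (ι₂ s) = s)
    (h : ∀ s, ι₁ s ≥ ι₂ s)
    (s : S) (hs : ι₁ s ≠ ι₂ s)
    (hmin : ∀ t, ι₁ t ≠ ι₂ t → t ≤ s → t = s) :
    ι₁ (ι₂ (ι₁ s)) = ι₂ (ι₂ (ι₁ s)) :=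
  stmt1_general ι₁ ι₂ h1 h2 h s hs hmin
end
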